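/- Let V ⊆ 𝒜, M an initial structure, s a state of M, and n ≥ 0. Then (M,s) ⊨ F_V(Tr_n(s)), i.e., every state satisfies the characterizing formula of its own computation tree of any depth. -/

import Mathlib

universe u

/-- A Kripke structure over a set of atoms: a finite nonempty set of states,
a serial transition relation, and a labeling function. -/
structure Kripke (Atom : Type u) where
  State : Type u
  stateFinite : Finite State
  stateNonempty : Nonempty State
  R : State → State → Prop
  serial : ∀ s, ∃ t, R s t
  L : State → Set Atom

instance {Atom : Type u} (M : Kripke Atom) : Finite M.State := M.stateFinite

/-- A K-structure: a Kripke structure together with one of its states. -/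
structure KStruct (Atom : Type u) where
  M : Kripke Atom
  s : M.State

/-- An initial structure: a Kripke structure with an initial state `s0`,
i.e. a state admitting a path visiting every state. -/
structure InitKripke (Atom : Type u) extends Kripke Atom where
  s0 : State
  initial : ∃ π : ℕ → State, π 0 = s0 ∧ (∀ n, R (π n) (π (n + 1))) ∧ ∀ t, ∃ n, π n = t

/-- The (initial) K-structure associated to an initial structure. -/
def InitKripke.toKS {Atom : Type u} (M : InitKripke Atom) : KStruct Atom :=
  ⟨M.toKripke, M.s0⟩

/-- The approximations `B_n^V` of `V`-bisimilarity on K-structures. -/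
def BRel {Atom : Type u} (V : Set Atom) : ℕ → KStruct Atom → KStruct Atom → Prop
  | 0 => fun K1 K2 => K1.M.L K1.s \ V = K2.M.L K2.s \ V
  | n + 1 => fun K1 K2 =>
      K1.M.L K1.s \ V = K2.M.L K2.s \ V ∧
      (∀ t1, K1.M.R K1.s t1 → ∃ t2, K2.M.R K2.s t2 ∧ BRel V n ⟨K1.M, t1⟩ ⟨K2.M, t2⟩) ∧
      (∀ t2, K2.M.R K2.s t2 → ∃ t1, K1.M.R K1.s t1 ∧ BRel V n ⟨K1.M, t1⟩ ⟨K2.M, t2⟩)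

/-- `V`-bisimilarity `K1 ↔_V K2` of K-structures. -/
def VBisim {Atom : Type u} (V : Set Atom) (K1 K2 : KStruct Atom) : Prop :=
  ∀ n, BRel V n K1 K2

/-- CTL formulas in existential normal form. -/
inductive CTL (Atom : Type u) : Type u
  | bot  : CTL Atom
  | top  : CTL Atom
  | atom (p : Atom) : CTL Atom
  | neg  (φ : CTL Atom) : CTL Atom
  | or   (φ ψ : CTL Atom) : CTL Atom
  | EX   (φ : CTL Atom) : CTL Atom
  | EG   (φ : CTL Atom) : CTL Atom
  | EU   (φ ψ : CTL Atom) : CTL Atom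

namespace CTL
variable {Atom : Type u}

def and (φ ψ : CTL Atom) : CTL Atom := .neg (.or (.neg φ) (.neg ψ))
def imp (φ ψ : CTL Atom) : CTL Atom := .or (.neg φ) ψ
def iff (φ ψ : CTL Atom) : CTL Atom := (φ.imp ψ).and (ψ.imp φ)
def AX (φ : CTL Atom) : CTL Atom := .neg (.EX (.neg φ))
def EF (φ : CTL Atom) : CTL Atom := .EU .top φ
def AF (φ : CTL Atom) : CTL Atom := .neg (.EG (.neg φ))
def AG (φ : CTL Atom) : CTL Atom := .neg (.EU .top (.neg φ))

/-- The set of atoms occurring in a formula. -/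
def vars : CTL Atom → Set Atom
  | .bot => ∅
  | .top => ∅
  | .atom p => {p}
  | .neg φ => vars φ
  | .or φ ψ => vars φ ∪ vars ψ
  | .EX φ => vars φ
  | .EG φ => vars φ
  | .EU φ ψ => vars φ ∪ vars ψ

end CTL

/-- The standard CTL satisfaction relation `(M,s) ⊨ φ`. -/
def Sat {Atom : Type u} (M : Kripke Atom) : CTL Atom → M.State → Prop
  | .bot => fun _ => False
  | .top => fun _ => True
  | .atom p => fun s => p ∈ M.L s
  | .neg φ => fun s => ¬ Sat M φ s
  | .or φ ψ => fun s => Sat M φ s ∨ Sat M ψ s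
  | .EX φ => fun s => ∃ t, M.R s t ∧ Sat M φ t
  | .EG φ => fun s => ∃ π : ℕ → M.State, π 0 = s ∧ (∀ n, M.R (π n) (π (n + 1))) ∧
      ∀ n, Sat M φ (π n)
  | .EU φ ψ => fun s => ∃ π : ℕ → M.State, π 0 = s ∧ (∀ n, M.R (π n) (π (n + 1))) ∧
      ∃ i, Sat M ψ (π i) ∧ ∀ j < i, Sat M φ (π j)

/-- Satisfaction for K-structures. -/
def KSat {Atom : Type u} (K : KStruct Atom) (φ : CTL Atom) : Prop := Sat K.M φ K.s

/-- The set of models (initial K-structures) of a formula. -/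
def CTLMod {Atom : Type u} (φ : CTL Atom) : Set (InitKripke Atom) :=
  {M | Sat M.toKripke φ M.s0}

def Entails {Atom : Type u} (φ ψ : CTL Atom) : Prop := CTLMod φ ⊆ CTLMod ψ

def CTLEquiv {Atom : Type u} (φ ψ : CTL Atom) : Prop := CTLMod φ = CTLMod ψ

/-- `IR φ V`: φ is irrelevant to the atoms in V. -/
def IR {Atom : Type u} (φ : CTL Atom) (V : Set Atom) : Prop :=
  ∃ ψ : CTL Atom, CTL.vars ψ ∩ V = ∅ ∧ CTLEquiv φ ψ

/-- `V`-bisimilarity of depth-`n` computation trees rooted at `s1` (in `M1`) and `s2` (in `M2`). -/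
def TreeBisim {Atom : Type u} (V : Set Atom) (M1 M2 : Kripke Atom) :
    ℕ → M1.State → M2.State → Prop
  | 0 => fun s1 s2 => M1.L s1 \ V = M2.L s2 \ V
  | n + 1 => fun s1 s2 =>
      M1.L s1 \ V = M2.L s2 \ V ∧
      (∀ t1, M1.R s1 t1 → ∃ t2, M2.R s2 t2 ∧ TreeBisim V M1 M2 n t1 t2) ∧
      (∀ t2, M2.R s2 t2 → ∃ t1, M1.R s1 t1 ∧ TreeBisim V M1 M2 n t1 t2)

/-- Finite conjunction of a list of formulas. -/
def andList {Atom : Type u} : List (CTL Atom) → CTL Atom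
  | [] => .top
  | φ :: l => φ.and (andList l)

/-- Finite disjunction of a list of formulas. -/
def orList {Atom : Type u} : List (CTL Atom) → CTL Atom
  | [] => .bot
  | φ :: l => .or φ (orList l)

/-- A list enumerating a subset of a finite type. -/
noncomputable def setToList {α : Type u} [Finite α] (s : Set α) : List α :=
  s.toFinite.toFinset.toList

/-- The list of `R`-successors of a state. -/
noncomputable def Kripke.succList {Atom : Type u} (M : Kripke Atom) (s : M.State) :
    List M.State :=
  setToList {t | M.R s t}

/-- The characterizing formula `F_V(Tr_0(s))` of the depth-0 computation tree. -/
noncomputable def charTree0 {Atom : Type u} [Finite Atom] (M : Kripke Atom) (V : Set Atom)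
    (s : M.State) : CTL Atom :=
  (andList ((setToList (V ∩ M.L s)).map CTL.atom)).and
    (andList ((setToList (V \ M.L s)).map fun q => CTL.neg (CTL.atom q)))

/-- The characterizing formula `F_V(Tr_n(s))` of the depth-`n` computation tree of `s`. -/
noncomputable def charTree {Atom : Type u} [Finite Atom] (M : Kripke Atom) (V : Set Atom) :
    ℕ → M.State → CTL Atom
  | 0 => fun s => charTree0 M V s
  | k + 1 => fun s =>
      (andList ((M.succList s).map fun t => CTL.EX (charTree M V k t))).and
        ((CTL.AX (orList ((M.succList s).map (charTree M V k)))).and (charTree0 M V s))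

/-- `dis_V(M,s,s',k)`: `s` and `s'` are `V`-distinguishable, and `k` is the least depth at which
their computation trees fail to be `(𝒜∖V)`-bisimilar. -/
def dis {Atom : Type u} (M : Kripke Atom) (V : Set Atom) (s s' : M.State) (k : ℕ) : Prop :=
  ¬ VBisim Vᶜ ⟨M, s⟩ ⟨M, s'⟩ ∧
  IsLeast {n | ¬ TreeBisim Vᶜ M M n s s'} k

/-- The characterization number `ch(M,V)`. -/
noncomputable def ch {Atom : Type u} (M : Kripke Atom) (V : Set Atom) : ℕ :=
  letI := Classical.dec (∃ s s' k, dis M V s s' k)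
  if ∃ s s' k, dis M V s s' k then
    sSup {k | ∃ s s', dis M V s s' k}
  else
    sInf {k | (fun s s' : M.State => BRel Vᶜ k ⟨M, s⟩ ⟨M, s'⟩) =
              (fun s s' : M.State => BRel Vᶜ (k + 1) ⟨M, s⟩ ⟨M, s'⟩)}

/-- The characterizing formula `F_V(M,s0)` of an initial K-structure on `V`. -/
noncomputable def charForm {Atom : Type u} [Finite Atom] (M : InitKripke Atom) (V : Set Atom) :
    CTL Atom :=
  let T : M.State → CTL Atom := fun s => charTree M.toKripke V (ch M.toKripke V) s
  (T M.s0).and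
    (andList ((setToList (Set.univ : Set M.State)).map fun s =>
      CTL.AG ((T s).imp
        ((andList ((M.toKripke.succList s).map fun t => CTL.EX (T t))).and
          (CTL.AX (orList ((M.toKripke.succList s).map T)))))))

/-- `ψ` is a result of forgetting `V` from `φ`. -/
def IsForget {Atom : Type u} (φ : CTL Atom) (V : Set Atom) (ψ : CTL Atom) : Prop :=
  CTL.vars ψ ∩ V = ∅ ∧
  CTLMod ψ = {K : InitKripke Atom | ∃ K' ∈ CTLMod φ, VBisim V K'.toKS K.toKS}

section Sat

variable {Atom : Type u} {M : Kripke Atom}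

lemma sat_and {φ ψ : CTL Atom} {s : M.State} :
    Sat M (φ.and ψ) s ↔ Sat M φ s ∧ Sat M ψ s := by
  simp [CTL.and, Sat]

lemma sat_AX {φ : CTL Atom} {s : M.State} :
    Sat M (CTL.AX φ) s ↔ ∀ t, M.R s t → Sat M φ t := by
  simp [CTL.AX, Sat]

lemma sat_andList {s : M.State} {l : List (CTL Atom)} :
    Sat M (andList l) s ↔ ∀ φ ∈ l, Sat M φ s := by
  induction l with
  | nil => simp [andList, Sat]
  | cons φ l ih => simp [andList, sat_and, ih]

lemma sat_orList {s : M.State} {l : List (CTL Atom)} :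
    Sat M (orList l) s ↔ ∃ φ ∈ l, Sat M φ s := by
  induction l with
  | nil => simp [orList, Sat]
  | cons φ l ih => simp [orList, Sat, ih]

end Sat

@[simp]
lemma mem_setToList {α : Type u} [Finite α] {s : Set α} {x : α} :
    x ∈ setToList s ↔ x ∈ s := by
  simp [setToList]

@[simp]
lemma Kripke.mem_succList {Atom : Type u} {M : Kripke Atom} {s t : M.State} :
    t ∈ M.succList s ↔ M.R s t := by
  simp [Kripke.succList]

lemma sat_charTree0 {Atom : Type u} [Finite Atom] (M : Kripke Atom) (V : Set Atom)
    (s : M.State) : Sat M (charTree0 M V s) s := by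
  simp only [charTree0, sat_and, sat_andList, List.forall_mem_map, mem_setToList]
  exact ⟨fun _ hp => hp.2, fun _ hq => hq.2⟩

lemma sat_charTree {Atom : Type u} [Finite Atom] (M : Kripke Atom) (V : Set Atom) (n : ℕ)
    (s : M.State) : Sat M (charTree M V n s) s := by
  induction n generalizing s with
  | zero => exact sat_charTree0 M V s
  | succ k ih =>
    simp only [charTree, sat_and, sat_AX, sat_andList, sat_orList,
      List.mem_map, exists_exists_and_eq_and, forall_exists_index, and_imp,
      forall_apply_eq_imp_iff₂, Kripke.mem_succList]
    exact ⟨fun t hst => ⟨t, hst, ih t⟩, fun t hst => ⟨t, hst, ih t⟩, sat_charTree0 M V s⟩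

/-- every state satisfies the characterizing formula of its own computation tree
of any depth: `(M,s) ⊨ F_V(Tr_n(s))`. -/
theorem sat_own_charTree {Atom : Type u} [Finite Atom] (V : Set Atom)
    (M : InitKripke Atom) (s : M.State) (n : ℕ) :
    Sat M.toKripke (charTree M.toKripke V n s) s :=
  sat_charTree M.toKripke V n s
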